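/- arXiv:2303.05148 — 2 statements merged into one kernel-verified Lean document; each statement's English description precedes it below -/
import Mathlib

section
/- Let θ₀ ∈ ℝ, and for each (i, j) ∈ Fin n × Fin n let p i j : ℝ → ℝ be differentiable at θ₀. Define P(θ) = Σ_{σ ∈ Equiv.Perm (Fin n)} ∏_{i} p i (σ i) θ. Then P is differentiable at θ₀ with P'(θ₀) = Σ_{i} Σ_{j} (deriv (p i j) θ₀) · (Σ_{σ ∈ Equiv.Perm (Fin n) with σ i = j} ∏_{i' ≠ i} p i' (σ i') θ₀). -/
/-! Apply the product rule to each permutation term, then regroup the resulting double sum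
over `(σ, i)` by the value `j = σ i`. -/

open Finset

theorem Equiv.Perm.sum_sum_apply_eq_sum_sum_filter {ι M : Type*} [Fintype ι] [DecidableEq ι]
    [AddCommMonoid M] (g : ι → ι → Equiv.Perm ι → M) :
    ∑ σ : Equiv.Perm ι, ∑ i, g i (σ i) σ =
      ∑ i, ∑ j, ∑ σ ∈ univ.filter (fun σ : Equiv.Perm ι => σ i = j), g i j σ := by
  rw [sum_comm]
  refine sum_congr rfl fun i _ => ?_
  rw [← sum_fiberwise univ (fun σ : Equiv.Perm ι => σ i)]
  refine sum_congr rfl fun j _ => sum_congr rfl fun σ hσ => ?_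
  rw [(mem_filter.mp hσ).2]

theorem hasDerivAt_sum_perm_prod {𝕜 ι : Type*} [NontriviallyNormedField 𝕜] [Fintype ι]
    [DecidableEq ι] {p : ι → ι → 𝕜 → 𝕜} {p' : ι → ι → 𝕜} {x : 𝕜}
    (hp : ∀ i j, HasDerivAt (p i j) (p' i j) x) :
    HasDerivAt (fun y => ∑ σ : Equiv.Perm ι, ∏ i, p i (σ i) y)
      (∑ i, ∑ j, p' i j *
        ∑ σ ∈ univ.filter (fun σ : Equiv.Perm ι => σ i = j), ∏ i' ∈ univ.erase i, p i' (σ i') x)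
      x := by
  have hprod (σ : Equiv.Perm ι) : HasDerivAt (fun y => ∏ i, p i (σ i) y)
      (∑ i, p' i (σ i) * ∏ i' ∈ univ.erase i, p i' (σ i') x) x := by
    simpa only [smul_eq_mul, mul_comm] using
      HasDerivAt.fun_finsetProd fun i _ => hp i (σ i)
  have hsum := HasDerivAt.fun_sum (u := univ) fun σ _ => hprod σ
  rw [Equiv.Perm.sum_sum_apply_eq_sum_sum_filter
    (fun i j σ => p' i j * ∏ i' ∈ univ.erase i, p i' (σ i') x)] at hsum
  simpa only [mul_sum] using hsum

theorem stmt_8 (n : ℕ) (θ₀ : ℝ) (p : Fin n → Fin n → ℝ → ℝ)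
    (hp : ∀ i j, DifferentiableAt ℝ (p i j) θ₀) :
    DifferentiableAt ℝ (fun θ => ∑ σ : Equiv.Perm (Fin n), ∏ i, p i (σ i) θ) θ₀ ∧
    deriv (fun θ => ∑ σ : Equiv.Perm (Fin n), ∏ i, p i (σ i) θ) θ₀ =
      ∑ i : Fin n, ∑ j : Fin n,
        deriv (p i j) θ₀ *
          ∑ σ ∈ Finset.univ.filter (fun σ : Equiv.Perm (Fin n) => σ i = j),
            ∏ i' ∈ Finset.univ.erase i, p i' (σ i') θ₀ := by
  have hP := hasDerivAt_sum_perm_prod fun i j => (hp i j).hasDerivAt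
  exact ⟨hP.differentiableAt, hP.deriv⟩
end

section
/- Let θ₀ ∈ ℝ, let E be a finite set of labelings f : Fin n → Fin K, and for each (i, j) let p i j : ℝ → ℝ be differentiable at θ₀. Define P(θ) = Σ_{f ∈ E} ∏_{i} p i (f i) θ and assume P(θ₀) > 0. Then the loss L(θ) = − Real.log (P θ) is differentiable at θ₀ with derivative L'(θ₀) = − (Σ_{i} Σ_{j} (deriv (p i j) θ₀) · C i j) / P(θ₀), where C i j = Σ_{f ∈ E with f i = j} ∏_{i' ≠ i} p i' (f i') θ₀. -/
/-! The query likelihood `P` is a polynomial in the class probabilities, so by the product rule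
`P'(θ₀) = ∑_{f ∈ E} ∑_i p_i'(f i) ∏_{i' ≠ i} p_{i'}(f i')`. Grouping the worlds `f` by the label
`j = f i` turns the inner coefficient of `p_{ij}'` into `C i j`, and the chain rule for `-log`
divides by `P(θ₀) > 0`. -/

open Finset

section Labelings

variable {ι κ : Type*} [Fintype ι] [Fintype κ] [DecidableEq ι] [DecidableEq κ]

theorem sum_sum_prod_erase_mul_eq_sum_sum_mul_sum_filter {R : Type*} [CommSemiring R]
    (E : Finset (ι → κ)) (q d : ι → κ → R) :
    ∑ f ∈ E, ∑ i, (∏ i' ∈ univ.erase i, q i' (f i')) * d i (f i) =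
      ∑ i, ∑ j, d i j * ∑ f ∈ E.filter (fun f => f i = j), ∏ i' ∈ univ.erase i, q i' (f i') := by
  rw [sum_comm]
  refine sum_congr rfl fun i _ => ?_
  rw [← sum_fiberwise E (fun f => f i)]
  refine sum_congr rfl fun j _ => ?_
  rw [mul_sum]
  refine sum_congr rfl fun f hf => ?_
  rw [(mem_filter.mp hf).2, mul_comm]

variable {𝕜 𝔸 : Type*} [NontriviallyNormedField 𝕜] [NormedCommRing 𝔸] [NormedAlgebra 𝕜 𝔸]

theorem hasDerivAt_sum_prod_labelings (E : Finset (ι → κ)) {p : ι → κ → 𝕜 → 𝔸}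
    {x : 𝕜} (hp : ∀ i j, DifferentiableAt 𝕜 (p i j) x) :
    HasDerivAt (fun y => ∑ f ∈ E, ∏ i, p i (f i) y)
      (∑ i, ∑ j, deriv (p i j) x *
        ∑ f ∈ E.filter (fun f => f i = j), ∏ i' ∈ univ.erase i, p i' (f i') x) x := by
  have hworld (f : ι → κ) :=
    HasDerivAt.fun_finsetProd fun i (_ : i ∈ univ) => (hp i (f i)).hasDerivAt
  simp only [smul_eq_mul] at hworld
  rw [← sum_sum_prod_erase_mul_eq_sum_sum_mul_sum_filter E (fun i j => p i j x)
    (fun i j => deriv (p i j) x)]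
  exact HasDerivAt.fun_sum fun f _ => hworld f

end Labelings

theorem stmt_9 (n K : ℕ) (θ₀ : ℝ) (E : Finset (Fin n → Fin K))
    (p : Fin n → Fin K → ℝ → ℝ) (hp : ∀ i j, DifferentiableAt ℝ (p i j) θ₀)
    (hP : 0 < ∑ f ∈ E, ∏ i, p i (f i) θ₀) :
    DifferentiableAt ℝ (fun θ => -Real.log (∑ f ∈ E, ∏ i, p i (f i) θ)) θ₀ ∧
    deriv (fun θ => -Real.log (∑ f ∈ E, ∏ i, p i (f i) θ)) θ₀ =
      -(∑ i : Fin n, ∑ j : Fin K,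
          deriv (p i j) θ₀ *
            ∑ f ∈ E.filter (fun f => f i = j),
              ∏ i' ∈ Finset.univ.erase i, p i' (f i') θ₀) /
        (∑ f ∈ E, ∏ i, p i (f i) θ₀) := by
  have hL := ((hasDerivAt_sum_prod_labelings E hp).log hP.ne').fun_neg
  exact ⟨hL.differentiableAt, by rw [hL.deriv, neg_div]⟩
end
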